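/- Let X be a chain and let α be an orientation-preserving full transformation of X. Then there exists an orientation-preserving full transformation β of X with αβα = α (i.e. α is a regular element of OP(X)) if and only if the following two conditions hold: (1) if Im(α) has an upper bound or a lower bound in X, then Im(α) has a maximum or Im(α) has a minimum; (2) for every x ∈ X\Im(α) that is neither an upper bound nor a lower bound of Im(α), either the set {t ∈ Im(α) : t < x} has a maximum or the set {t ∈ Im(α) : t > x} has a minimum. -/
import Mathlib

variable {X : Type*}

/-- The full transformation `f` is order-preserving on the subset `A`. -/
def OrdOn [LinearOrder X] (f : X → X) (A : Set X) : Prop :=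
  ∀ ⦃x y : X⦄, x ∈ A → y ∈ A → x ≤ y → f x ≤ f y

/-- `Y` is an ideal of the full transformation `f`. -/
def IsIdealFull [LinearOrder X] (f : X → X) (Y : Set X) : Prop :=
  Y.Nonempty ∧ OrdOn f Y ∧ OrdOn f Yᶜ ∧
    ∀ ⦃a b : X⦄, a ∈ Y → b ∈ Yᶜ → a ≤ b ∧ f b ≤ f a

/-- `f` is an orientation-preserving full transformation. -/
def IsOPFull [LinearOrder X] (f : X → X) : Prop := ∃ Y : Set X, IsIdealFull f Y

section Forward

variable [LinearOrder X] {α β : X → X} {Y Z : Set X}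

/-- An ideal-like set for the composite `x ↦ α (β x)` (nonemptiness not required). -/
lemma comp_ideal (hY : IsIdealFull α Y) (hZ : IsIdealFull β Z) :
    ∃ W : Set X, OrdOn (fun x => α (β x)) W ∧ OrdOn (fun x => α (β x)) Wᶜ ∧
      ∀ ⦃a b : X⦄, a ∈ W → b ∈ Wᶜ → a ≤ b ∧ α (β b) ≤ α (β a) := by
  obtain ⟨hYne, hY1, hY2, hYc⟩ := hY
  obtain ⟨hZne, hZ1, hZ2, hZc⟩ := hZ
  by_cases hA : ∃ a, a ∈ Z ∧ β a ∈ Y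
  · obtain ⟨a₀, ha₀Z, ha₀Y⟩ := hA
    by_cases hD : ∃ d, d ∉ Z ∧ β d ∉ Y
    · obtain ⟨d₀, hd₀Z, hd₀Y⟩ := hD
      have key : β a₀ = β d₀ := le_antisymm (hYc ha₀Y hd₀Y).1 (hZc ha₀Z hd₀Z).2
      have hconst : ∀ x, α (β x) = α (β a₀) := by
        intro x
        by_cases hxZ : x ∈ Z
        · by_cases hxY : β x ∈ Y
          · have h1 : β x = β d₀ := le_antisymm (hYc hxY hd₀Y).1 (hZc hxZ hd₀Z).2
            rw [h1, ← key]
          · apply le_antisymm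
            · exact (hYc ha₀Y hxY).2
            · rw [key]; exact hY2 hd₀Y hxY (hZc hxZ hd₀Z).2
        · by_cases hxY : β x ∈ Y
          · apply le_antisymm
            · exact hY1 hxY ha₀Y (hZc ha₀Z hxZ).2
            · rw [key]; exact (hYc hxY hd₀Y).2
          · have h1 : β x = β a₀ := le_antisymm (hZc ha₀Z hxZ).2 (hYc ha₀Y hxY).1
            rw [h1]
      refine ⟨Set.univ, ?_, ?_, ?_⟩
      · intro x y _ _ _; show α (β x) ≤ α (β y); rw [hconst x, hconst y]
      · intro x y hx _ _; exact absurd (Set.mem_univ x) hx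
      · intro a b _ hb; exact absurd (Set.mem_univ b) hb
    · -- D empty
      have hD' : ∀ x, x ∉ Z → β x ∈ Y := fun x hx => by
        by_contra h; exact hD ⟨x, hx, h⟩
      refine ⟨{x | x ∈ Z ∧ β x ∈ Y}, ?_, ?_, ?_⟩
      · rintro x y ⟨hxZ, hxY⟩ ⟨hyZ, hyY⟩ hxy
        exact hY1 hxY hyY (hZ1 hxZ hyZ hxy)
      · intro x y hx hy hxy
        by_cases hxZ : x ∈ Z
        · have hxY : β x ∉ Y := fun h => hx ⟨hxZ, h⟩
          by_cases hyZ : y ∈ Z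
          · have hyY : β y ∉ Y := fun h => hy ⟨hyZ, h⟩
            exact hY2 hxY hyY (hZ1 hxZ hyZ hxy)
          · exact (hYc (hD' y hyZ) hxY).2
        · have hxY : β x ∈ Y := hD' x hxZ
          by_cases hyZ : y ∈ Z
          · have : x = y := le_antisymm hxy (hZc hyZ hxZ).1
            rw [this]
          · exact hY1 hxY (hD' y hyZ) (hZ2 hxZ hyZ hxy)
      · rintro a b ⟨haZ, haY⟩ hb
        by_cases hbZ : b ∈ Z
        · have hbY : β b ∉ Y := fun h => hb ⟨hbZ, h⟩
          constructor
          · by_contra h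
            have hba : b ≤ a := le_of_not_ge h
            have h1 : β b ≤ β a := hZ1 hbZ haZ hba
            have h2 : β a ≤ β b := (hYc haY hbY).1
            exact hbY (le_antisymm h1 h2 ▸ haY)
          · exact (hYc haY hbY).2
        · exact ⟨(hZc haZ hbZ).1, hY1 (hD' b hbZ) haY (hZc haZ hbZ).2⟩
  · -- A empty
    have hA' : ∀ x, x ∈ Z → β x ∉ Y := fun x hx h => hA ⟨x, hx, h⟩
    refine ⟨{x | x ∈ Z ∨ β x ∈ Y}, ?_, ?_, ?_⟩
    · intro x y hx hy hxy
      by_cases hxZ : x ∈ Z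
      · by_cases hyZ : y ∈ Z
        · exact hY2 (hA' x hxZ) (hA' y hyZ) (hZ1 hxZ hyZ hxy)
        · have hyY : β y ∈ Y := hy.resolve_left hyZ
          exact (hYc hyY (hA' x hxZ)).2
      · have hxY : β x ∈ Y := hx.resolve_left hxZ
        by_cases hyZ : y ∈ Z
        · have : x = y := le_antisymm hxy (hZc hyZ hxZ).1
          rw [this]
        · exact hY1 hxY (hy.resolve_left hyZ) (hZ2 hxZ hyZ hxy)
    · intro x y hx hy hxy
      have hx' : x ∉ Z ∧ β x ∉ Y := by
        constructor
        · exact fun h => hx (Or.inl h)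
        · exact fun h => hx (Or.inr h)
      have hy' : y ∉ Z ∧ β y ∉ Y := by
        constructor
        · exact fun h => hy (Or.inl h)
        · exact fun h => hy (Or.inr h)
      exact hY2 hx'.2 hy'.2 (hZ2 hx'.1 hy'.1 hxy)
    · intro a b ha hb
      have hb' : b ∉ Z ∧ β b ∉ Y := by
        constructor
        · exact fun h => hb (Or.inl h)
        · exact fun h => hb (Or.inr h)
      rcases ha with haZ | haY
      · exact ⟨(hZc haZ hb'.1).1, hY2 hb'.2 (hA' a haZ) (hZc haZ hb'.1).2⟩
      · have haZ : a ∉ Z := fun h => hA' a h haY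
        constructor
        · by_contra h
          have hba : b ≤ a := le_of_not_ge h
          have h1 : β b ≤ β a := hZ2 hb'.1 haZ hba
          have h2 : β a ≤ β b := (hYc haY hb'.2).1
          exact hb'.2 (le_antisymm h1 h2 ▸ haY)
        · exact (hYc haY hb'.2).2

end Forward
section Forward2

variable [LinearOrder X] {α β : X → X}

lemma forward_conds {Y Z : Set X} (hY : IsIdealFull α Y) (hZ : IsIdealFull β Z)
    (hreg : ∀ x, α (β (α x)) = α x) :
    (((BddAbove (Set.range α) ∨ BddBelow (Set.range α)) →
        ((∃ m, IsGreatest (Set.range α) m) ∨ ∃ m, IsLeast (Set.range α) m)) ∧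
      ∀ x : X, x ∉ Set.range α → x ∉ upperBounds (Set.range α) →
        x ∉ lowerBounds (Set.range α) →
        ((∃ m, IsGreatest {t ∈ Set.range α | t < x} m) ∨
          ∃ m, IsLeast {t ∈ Set.range α | x < t} m)) := by
  obtain ⟨W, hW1, hW2, hWc⟩ := comp_ideal hY hZ
  set I := Set.range α with hI
  set g : X → X := fun x => α (β x) with hg
  have hfix : ∀ t ∈ I, g t = t := by rintro t ⟨x, rfl⟩; exact hreg x
  have hgI : ∀ x, g x ∈ I := fun x => ⟨β x, rfl⟩
  constructor
  · rintro (⟨u, hu⟩ | ⟨l, hl⟩)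
    · by_cases huI : u ∈ I
      · exact Or.inl ⟨u, huI, hu⟩
      · have hguI := hgI u
        by_cases huW : u ∈ W
        · left; refine ⟨g u, hguI, ?_⟩; intro t ht
          have htu : t < u := lt_of_le_of_ne (hu ht) (fun h => huI (h ▸ ht))
          have htW : t ∈ W := by
            by_contra htW
            exact absurd (hWc huW htW).1 (not_le_of_gt htu)
          have h2 := hW1 htW huW htu.le
          rwa [hfix t ht] at h2
        · by_cases hAI : ∃ t, t ∈ I ∧ t ∈ W
          · right; refine ⟨g u, hguI, ?_⟩; intro t ht
            by_cases htW : t ∈ W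
            · have h2 : g u ≤ g t := (hWc htW huW).2
              rwa [hfix t ht] at h2
            · obtain ⟨t₁, ht₁I, ht₁W⟩ := hAI
              have h1 : t₁ ≤ t := (hWc ht₁W htW).1
              have h2 : g u ≤ g t₁ := (hWc ht₁W huW).2
              rw [hfix t₁ ht₁I] at h2
              exact le_trans h2 h1
          · left; refine ⟨g u, hguI, ?_⟩; intro t ht
            have htW : t ∉ W := fun h => hAI ⟨t, ht, h⟩
            have h2 := hW2 htW huW (hu ht)
            rwa [hfix t ht] at h2
    · by_cases hlI : l ∈ I
      · exact Or.inr ⟨l, hlI, hl⟩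
      · have hglI := hgI l
        by_cases hlW : l ∈ W
        · by_cases hBI : ∃ t, t ∈ I ∧ t ∉ W
          · left; refine ⟨g l, hglI, ?_⟩; intro t ht
            by_cases htW : t ∈ W
            · obtain ⟨t₂, ht₂I, ht₂W⟩ := hBI
              have h1 : t ≤ t₂ := (hWc htW ht₂W).1
              have h2 : g t₂ ≤ g l := (hWc hlW ht₂W).2
              rw [hfix t₂ ht₂I] at h2
              exact le_trans h1 h2
            · have h2 : g t ≤ g l := (hWc hlW htW).2
              rwa [hfix t ht] at h2
          · right; refine ⟨g l, hglI, ?_⟩; intro t ht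
            have htW : t ∈ W := by
              by_contra h; exact hBI ⟨t, ht, h⟩
            have h2 := hW1 hlW htW (hl ht)
            rwa [hfix t ht] at h2
        · right; refine ⟨g l, hglI, ?_⟩; intro t ht
          have htW : t ∉ W := by
            intro h
            have h1 : t = l := le_antisymm (hWc h hlW).1 (hl ht)
            exact hlI (h1 ▸ ht)
          have h2 := hW2 hlW htW (hl ht)
          rwa [hfix t ht] at h2
  · intro x hxI hxu hxl
    have h0 : ∃ t ∈ I, t < x := by
      by_contra h; push_neg at h
      exact hxl fun t ht => h t ht
    have h1 : ∃ t ∈ I, x < t := by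
      by_contra h; push_neg at h
      exact hxu fun t ht => h t ht
    obtain ⟨t₀, ht₀I, ht₀x⟩ := h0
    obtain ⟨t₁, ht₁I, hxt₁⟩ := h1
    have hgxI := hgI x
    have hgxne : g x ≠ x := fun h => hxI (h ▸ hgxI)
    have low : ∀ t ∈ I, t < x → t ≤ g x := by
      intro t ht htx
      by_cases hxW : x ∈ W
      · have htW : t ∈ W := by
          by_contra htW
          exact absurd (hWc hxW htW).1 (not_le_of_gt htx)
        have h2 := hW1 htW hxW htx.le
        rwa [hfix t ht] at h2
      · have htW : t ∉ W := by
          intro htW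
          have ht₁W : t₁ ∉ W := by
            intro h
            exact absurd (hWc h hxW).1 (not_le_of_gt hxt₁)
          have h2 : g t₁ ≤ g t := (hWc htW ht₁W).2
          rw [hfix t₁ ht₁I, hfix t ht] at h2
          exact absurd (lt_of_le_of_lt h2 htx) (not_lt_of_gt hxt₁)
        have h2 := hW2 htW hxW htx.le
        rwa [hfix t ht] at h2
    have high : ∀ t ∈ I, x < t → g x ≤ t := by
      intro t ht hxt
      by_cases hxW : x ∈ W
      · have htW : t ∈ W := by
          by_contra htW
          have ht₀W : t₀ ∈ W := by
            by_contra h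
            exact absurd (hWc hxW h).1 (not_le_of_gt ht₀x)
          have h2 : g t ≤ g t₀ := (hWc ht₀W htW).2
          rw [hfix t₀ ht₀I, hfix t ht] at h2
          exact absurd (lt_of_le_of_lt h2 ht₀x) (not_lt_of_gt hxt)
        have h2 := hW1 hxW htW hxt.le
        rwa [hfix t ht] at h2
      · have htW : t ∉ W := by
          intro h
          exact absurd (hWc h hxW).1 (not_le_of_gt hxt)
        have h2 := hW2 hxW htW hxt.le
        rwa [hfix t ht] at h2
    rcases lt_or_gt_of_ne hgxne with h | h
    · exact Or.inl ⟨g x, ⟨hgxI, h⟩, fun t ⟨htI, htx⟩ => low t htI htx⟩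
    · exact Or.inr ⟨g x, ⟨hgxI, h⟩, fun t ⟨htI, htx⟩ => high t htI htx⟩

end Forward2
section Backward

variable [LinearOrder X]

/-- Monotonicity of a "nearest point" selection on non-wrap points. -/
lemma Fmono_aux {I : Set X} {F : X → X} (hFI : ∀ x, F x ∈ I) {x y : X} (hxy : x ≤ y)
    (hx : IsGreatest {t ∈ I | t ≤ x} (F x) ∨
      (IsLeast {t ∈ I | x ≤ t} (F x) ∧ ¬∃ m, IsGreatest {t ∈ I | t < x} m))
    (hy : IsGreatest {t ∈ I | t ≤ y} (F y) ∨
      (IsLeast {t ∈ I | y ≤ t} (F y) ∧ ¬∃ m, IsGreatest {t ∈ I | t < y} m)) :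
    F x ≤ F y := by
  rcases hx with hx | hx
  · rcases hy with hy | hy
    · exact hy.2 ⟨hFI x, le_trans hx.1.2 hxy⟩
    · exact le_trans (le_trans hx.1.2 hxy) hy.1.1.2
  · rcases hy with hy | hy
    · by_cases h : x ≤ F y
      · exact hx.1.2 ⟨hFI y, h⟩
      · exfalso; apply hx.2
        refine ⟨F y, ⟨hFI y, lt_of_not_ge h⟩, ?_⟩
        rintro t ⟨htI, htx⟩
        exact hy.2 ⟨htI, le_trans htx.le hxy⟩
    · exact hx.1.2 ⟨hFI y, le_trans hxy hy.1.1.2⟩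

end Backward
section BackwardMain

variable [LinearOrder X] {α : X → X} {Y : Set X}

lemma backward_main (hY : IsIdealFull α Y)
    (cond1 : (BddAbove (Set.range α) ∨ BddBelow (Set.range α)) →
        ((∃ m, IsGreatest (Set.range α) m) ∨ ∃ m, IsLeast (Set.range α) m))
    (cond2 : ∀ x : X, x ∉ Set.range α → x ∉ upperBounds (Set.range α) →
        x ∉ lowerBounds (Set.range α) →
        ((∃ m, IsGreatest {t ∈ Set.range α | t < x} m) ∨
          ∃ m, IsLeast {t ∈ Set.range α | x < t} m)) :
    ∃ β : X → X, IsOPFull β ∧ (fun x => α (β (α x))) = α := by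
  classical
  obtain ⟨hYne, hY1, hY2, hYc⟩ := hY
  set I := Set.range α with hIdef
  set hi := α '' Y with hhidef
  set lo := I \ hi with hlodef
  obtain ⟨y0, hy0⟩ := hYne
  have hhiI : hi ⊆ I := by rintro y ⟨x, _, rfl⟩; exact ⟨x, rfl⟩
  have hloI : lo ⊆ I := fun y hy => hy.1
  have hhine : hi.Nonempty := ⟨α y0, y0, hy0, rfl⟩
  -- the preimage selector p
  have hex : ∀ y : X, ∃ z : X, (y ∈ hi → z ∈ Y ∧ α z = y) ∧ (y ∈ lo → z ∉ Y ∧ α z = y) := by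
    intro y
    by_cases h : y ∈ hi
    · obtain ⟨z, hz, hzy⟩ := h
      exact ⟨z, fun _ => ⟨hz, hzy⟩, fun h' => absurd ⟨z, hz, hzy⟩ h'.2⟩
    · by_cases h2 : y ∈ I
      · obtain ⟨z, hzy⟩ := h2
        refine ⟨z, fun h' => absurd h' h, fun _ => ⟨?_, hzy⟩⟩
        intro hzY; exact h ⟨z, hzY, hzy⟩
      · exact ⟨y, fun h' => absurd (hhiI h') h2, fun h' => absurd h'.1 h2⟩
  choose p hp1 hp2 using hex
  -- monotonicity of p
  have hp3 : ∀ ⦃y y'⦄, y ∈ hi → y' ∈ hi → y ≤ y' → p y ≤ p y' := by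
    intro y y' hy hy' hle
    by_contra h
    have h2 : α (p y') ≤ α (p y) := hY1 (hp1 y' hy').1 (hp1 y hy).1 (le_of_not_ge h)
    rw [(hp1 y' hy').2, (hp1 y hy).2] at h2
    have : y = y' := le_antisymm hle h2
    exact h (this ▸ le_refl (p y))
  have hp4 : ∀ ⦃y y'⦄, y ∈ lo → y' ∈ lo → y ≤ y' → p y ≤ p y' := by
    intro y y' hy hy' hle
    by_contra h
    have h2 : α (p y') ≤ α (p y) := hY2 (hp2 y' hy').1 (hp2 y hy).1 (le_of_not_ge h)
    rw [(hp2 y' hy').2, (hp2 y hy).2] at h2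
    have : y = y' := le_antisymm hle h2
    exact h (this ▸ le_refl (p y))
  have hpc : ∀ ⦃y y'⦄, y ∈ lo → y' ∈ hi → y ≤ y' ∧ p y' ≤ p y := by
    intro y y' hy hy'
    have h := hYc (hp1 y' hy').1 (hp2 y hy).1
    refine ⟨?_, h.1⟩
    have h2 := h.2
    rwa [(hp1 y' hy').2, (hp2 y hy).2] at h2
  -- least elements lie in lo (when lo is nonempty), greatest in hi
  have hmin_lo : lo.Nonempty → ∀ m, IsLeast I m → m ∈ lo := by
    rintro ⟨t, ht⟩ m hm
    refine ⟨hm.1, fun hmhi => ?_⟩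
    have h1 : t ≤ m := (hpc ht hmhi).1
    have h2 : m ≤ t := hm.2 (hloI ht)
    have : m = t := le_antisymm h2 h1
    exact ht.2 (this ▸ hmhi)
  have hmax_hi : ∀ m, IsGreatest I m → m ∈ hi := by
    intro m hm
    by_contra hmhi
    obtain ⟨s, hs⟩ := hhine
    have hmlo : m ∈ lo := ⟨hm.1, hmhi⟩
    have h1 : m ≤ s := (hpc hmlo hs).1
    have h2 : s ≤ m := hm.2 (hhiI hs)
    exact hmhi ((le_antisymm h2 h1) ▸ hs)
  -- the selector F
  have quadex : ∀ x : X, ∃ z : X,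
      (IsGreatest {t ∈ I | t ≤ x} z) ∨
      ((IsLeast {t ∈ I | x ≤ t} z ∧ ¬∃ m, IsGreatest {t ∈ I | t < x} m) ∧ x ∉ I) ∨
      (x ∉ I ∧ x ∈ upperBounds I ∧ IsLeast I z ∧ ¬∃ m, IsGreatest I m) ∨
      (x ∉ I ∧ x ∈ lowerBounds I ∧ IsGreatest I z ∧ ¬∃ m, IsLeast I m) := by
    intro x
    by_cases hx : x ∈ I
    · exact ⟨x, Or.inl ⟨⟨hx, le_refl x⟩, fun t ht => ht.2⟩⟩
    · by_cases h1 : ∃ m, IsGreatest {t ∈ I | t < x} m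
      · obtain ⟨m, hm⟩ := h1
        refine ⟨m, Or.inl ⟨⟨hm.1.1, hm.1.2.le⟩, ?_⟩⟩
        rintro t ⟨htI, htx⟩
        exact hm.2 ⟨htI, lt_of_le_of_ne htx (fun h => hx (h ▸ htI))⟩
      · by_cases h2 : ∃ m, IsLeast {t ∈ I | x < t} m
        · obtain ⟨m, hm⟩ := h2
          refine ⟨m, Or.inr (Or.inl ⟨⟨⟨⟨hm.1.1, hm.1.2.le⟩, ?_⟩, h1⟩, hx⟩)⟩
          rintro t ⟨htI, htx⟩
          exact hm.2 ⟨htI, lt_of_le_of_ne htx (fun h => hx (h.symm ▸ htI))⟩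
        · by_cases hub : x ∈ upperBounds I
          · have hnomax : ¬∃ m, IsGreatest I m := by
              rintro ⟨m, hm⟩
              exact h1 ⟨m, ⟨hm.1, lt_of_le_of_ne (hub hm.1) (fun h => hx (h ▸ hm.1))⟩,
                fun t ht => hm.2 ht.1⟩
            obtain ⟨m, hm⟩ := (cond1 (Or.inl ⟨x, hub⟩)).resolve_left hnomax
            exact ⟨m, Or.inr (Or.inr (Or.inl ⟨hx, hub, hm, hnomax⟩))⟩
          · by_cases hlb : x ∈ lowerBounds I
            · have hnomin : ¬∃ m, IsLeast I m := by
                rintro ⟨m, hm⟩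
                exact h2 ⟨m, ⟨hm.1, lt_of_le_of_ne (hlb hm.1) (fun h => hx (h.symm ▸ hm.1))⟩,
                  fun t ht => hm.2 ht.1⟩
              obtain ⟨m, hm⟩ := (cond1 (Or.inr ⟨x, hlb⟩)).resolve_right hnomin
              exact ⟨m, Or.inr (Or.inr (Or.inr ⟨hx, hlb, hm, hnomin⟩))⟩
            · rcases cond2 x hx hub hlb with h | h
              · exact absurd h h1
              · exact absurd h h2
  choose F hF using quadex
  have hFI : ∀ x, F x ∈ I := by
    intro x
    rcases hF x with h | h | h | h
    · exact h.1.1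
    · exact h.1.1.1.1
    · exact h.2.2.1.1
    · exact h.2.2.1.1
  have hFfix : ∀ x, x ∈ I → F x = x := by
    intro x hx
    rcases hF x with h | h | h | h
    · exact le_antisymm h.1.2 (h.2 ⟨hx, le_refl x⟩)
    · exact absurd hx h.2
    · exact absurd hx h.1
    · exact absurd hx h.1
  have hFhi : ∀ x, F x ∉ lo → F x ∈ hi := by
    intro x h
    by_contra h2; exact h ⟨hFI x, h2⟩
  have hLR : ∀ x, ¬(x ∉ I ∧ x ∈ upperBounds I ∧ ¬∃ m, IsGreatest I m) →
      ¬(x ∉ I ∧ x ∈ lowerBounds I ∧ ¬∃ m, IsLeast I m) →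
      (IsGreatest {t ∈ I | t ≤ x} (F x) ∨
        (IsLeast {t ∈ I | x ≤ t} (F x) ∧ ¬∃ m, IsGreatest {t ∈ I | t < x} m)) := by
    intro x h1 h2
    rcases hF x with h | h | h | h
    · exact Or.inl h
    · exact Or.inr h.1
    · exact absurd ⟨h.1, h.2.1, h.2.2.2⟩ h1
    · exact absurd ⟨h.1, h.2.1, h.2.2.2⟩ h2
  refine ⟨fun x => p (F x), ?_, ?_⟩
  · -- the constructed map is orientation-preserving
    by_cases hTW : ∃ w, w ∉ I ∧ w ∈ upperBounds I ∧ ¬∃ m, IsGreatest I m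
    · obtain ⟨w, hwI, hwub, hnomax⟩ := hTW
      obtain ⟨m, hm⟩ := (cond1 (Or.inl ⟨w, hwub⟩)).resolve_left hnomax
      have hkey : ∀ x, (∃ s ∈ I, x < s) →
          (IsGreatest {t ∈ I | t ≤ x} (F x) ∨
            (IsLeast {t ∈ I | x ≤ t} (F x) ∧ ¬∃ m, IsGreatest {t ∈ I | t < x} m)) := by
        intro x hs
        apply hLR
        · rintro ⟨_, hub, _⟩
          obtain ⟨s, hsI, hxs⟩ := hs
          exact absurd (hub hsI) (not_le_of_gt hxs)
        · rintro ⟨_, _, hnomin⟩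
          exact hnomin ⟨m, hm⟩
      have hkey2 : ∀ x, ¬(∃ s ∈ I, x < s) → F x = m := by
        intro x hs
        have hub : x ∈ upperBounds I := fun t ht => le_of_not_gt (fun h => hs ⟨t, ht, h⟩)
        by_cases hxI : x ∈ I
        · exact absurd ⟨x, hxI, hub⟩ hnomax
        · rcases hF x with h | h | h | h
          · exact absurd ⟨F x, h.1.1, fun t ht => h.2 ⟨ht, hub ht⟩⟩ hnomax
          · have hFx : F x = x := le_antisymm (hub h.1.1.1.1) h.1.1.1.2
            exact absurd (hFx ▸ hFI x) hxI
          · exact h.2.2.1.unique hm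
          · have h1 : x ≤ α y0 := h.2.1 ⟨y0, rfl⟩
            have h2 : α y0 ≤ x := hub ⟨y0, rfl⟩
            exact absurd ((le_antisymm h1 h2).symm ▸ (⟨y0, rfl⟩ : α y0 ∈ I)) hxI
      by_cases hlo : lo.Nonempty
      · have hmlo : m ∈ lo := hmin_lo hlo m hm
        refine ⟨{x | (∃ s ∈ I, x < s) ∧ F x ∈ lo}, ?_, ?_, ?_, ?_⟩
        · obtain ⟨t, ht⟩ := hlo
          have htI := hloI ht
          have hts : ∃ s ∈ I, t < s := by
            by_contra h
            push_neg at h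
            exact hnomax ⟨t, htI, fun s hs => h s hs⟩
          refine ⟨t, hts, ?_⟩
          rw [hFfix t htI]; exact ht
        · rintro x y ⟨hxs, hxlo⟩ ⟨hys, hylo⟩ hxy
          exact hp4 hxlo hylo (Fmono_aux hFI hxy (hkey x hxs) (hkey y hys))
        · intro x y hx hy hxy
          show p (F x) ≤ p (F y)
          by_cases hxs : ∃ s ∈ I, x < s
          · have hxhi : F x ∈ hi := hFhi x (fun h => hx ⟨hxs, h⟩)
            by_cases hys : ∃ s ∈ I, y < s
            · have hyhi : F y ∈ hi := hFhi y (fun h => hy ⟨hys, h⟩)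
              exact hp3 hxhi hyhi (Fmono_aux hFI hxy (hkey x hxs) (hkey y hys))
            · rw [hkey2 y hys]
              exact (hpc hmlo hxhi).2
          · have hys : ¬∃ s ∈ I, y < s := by
              rintro ⟨s, hsI, hys⟩
              exact hxs ⟨s, hsI, lt_of_le_of_lt hxy hys⟩
            rw [hkey2 x hxs, hkey2 y hys]
        · rintro a b ⟨has, halo⟩ hb
          have hab : a ≤ b := by
            by_contra h
            have hba : b < a := lt_of_not_ge h
            have hbs : ∃ s ∈ I, b < s := by
              obtain ⟨s, hsI, has2⟩ := has
              exact ⟨s, hsI, lt_trans hba has2⟩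
            have hbhi : F b ∈ hi := hFhi b (fun h2 => hb ⟨hbs, h2⟩)
            have h1 : F b ≤ F a := Fmono_aux hFI hba.le (hkey b hbs) (hkey a has)
            have h2 : F a ≤ F b := (hpc halo hbhi).1
            exact halo.2 ((le_antisymm h1 h2) ▸ hbhi)
          refine ⟨hab, ?_⟩
          show p (F b) ≤ p (F a)
          by_cases hbs : ∃ s ∈ I, b < s
          · exact (hpc halo (hFhi b (fun h2 => hb ⟨hbs, h2⟩))).2
          · rw [hkey2 b hbs]
            exact hp4 hmlo halo (hm.2 (hloI halo))
      · have hallhi : ∀ x, F x ∈ hi := fun x => hFhi x (fun h => hlo ⟨F x, h⟩)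
        have hmhi : m ∈ hi := by
          by_contra h; exact hlo ⟨m, hm.1, h⟩
        refine ⟨{x | ∃ s ∈ I, x < s}, ?_, ?_, ?_, ?_⟩
        · obtain ⟨s, hsI, hms⟩ : ∃ s ∈ I, m < s := by
            by_contra h
            push_neg at h
            exact hnomax ⟨m, hm.1, fun s hs => h s hs⟩
          exact ⟨m, s, hsI, hms⟩
        · intro x y hx hy hxy
          exact hp3 (hallhi x) (hallhi y) (Fmono_aux hFI hxy (hkey x hx) (hkey y hy))
        · intro x y hx hy hxy
          show p (F x) ≤ p (F y)
          rw [hkey2 x hx, hkey2 y hy]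
        · intro a b ha hb
          have hab : a ≤ b := by
            by_contra h
            obtain ⟨s, hsI, has⟩ := ha
            exact hb ⟨s, hsI, lt_trans (lt_of_not_ge h) has⟩
          refine ⟨hab, ?_⟩
          show p (F b) ≤ p (F a)
          rw [hkey2 b hb]
          exact hp3 hmhi (hallhi a) (hm.2 (hFI a))
    · by_cases hBW : ∃ w, w ∉ I ∧ w ∈ lowerBounds I ∧ ¬∃ m, IsLeast I m
      · obtain ⟨w, hwI, hwlb, hnomin⟩ := hBW
        obtain ⟨M, hM⟩ := (cond1 (Or.inr ⟨w, hwlb⟩)).resolve_right hnomin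
        have hMhi : M ∈ hi := hmax_hi M hM
        have hkey : ∀ x, ¬(x ∉ I ∧ x ∈ lowerBounds I) →
            (IsGreatest {t ∈ I | t ≤ x} (F x) ∨
              (IsLeast {t ∈ I | x ≤ t} (F x) ∧ ¬∃ m, IsGreatest {t ∈ I | t < x} m)) := by
          intro x h
          apply hLR
          · rintro ⟨hxI, hub, hnomax⟩
            exact hnomax ⟨M, hM⟩
          · rintro ⟨hxI, hlb, _⟩
            exact h ⟨hxI, hlb⟩
        have hkey2 : ∀ x, x ∉ I → x ∈ lowerBounds I → F x = M := by
          intro x hxI hlb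
          rcases hF x with h | h | h | h
          · exact absurd ((le_antisymm h.1.2 (hlb h.1.1)) ▸ hFI x) hxI
          · exact absurd ⟨F x, h.1.1.1.1, fun t ht => h.1.1.2 ⟨ht, hlb ht⟩⟩ hnomin
          · have h1 : x ≤ α y0 := hlb ⟨y0, rfl⟩
            have h2 : α y0 ≤ x := h.2.1 ⟨y0, rfl⟩
            exact absurd ((le_antisymm h1 h2).symm ▸ (⟨y0, rfl⟩ : α y0 ∈ I)) hxI
          · exact h.2.2.1.unique hM
        have hnotboth : ∀ x, F x ∈ lo → ¬(x ∉ I ∧ x ∈ lowerBounds I) := by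
          rintro x hxlo ⟨hxI, hlb⟩
          rw [hkey2 x hxI hlb] at hxlo
          exact hxlo.2 hMhi
        by_cases hlo : lo.Nonempty
        · refine ⟨{x | F x ∈ lo ∨ (x ∉ I ∧ x ∈ lowerBounds I)}, ?_, ?_, ?_, ?_⟩
          · obtain ⟨t, ht⟩ := hlo
            refine ⟨t, Or.inl ?_⟩
            rw [hFfix t (hloI ht)]; exact ht
          · rintro x y hx hy hxy
            show p (F x) ≤ p (F y)
            rcases hx with hxlo | hxw
            · rcases hy with hylo | hyw
              · exact hp4 hxlo hylo
                  (Fmono_aux hFI hxy (hkey x (hnotboth x hxlo)) (hkey y (hnotboth y hylo)))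
              · exfalso
                by_cases hxI : x ∈ I
                · exact hyw.1 ((le_antisymm hxy (hyw.2 hxI)).symm ▸ hxI)
                · by_cases hlb : x ∈ lowerBounds I
                  · exact hnotboth x hxlo ⟨hxI, hlb⟩
                  · have hex2 : ∃ t ∈ I, t < x := by
                      by_contra h; push_neg at h
                      exact hlb fun t ht => h t ht
                    obtain ⟨t, htI, htx⟩ := hex2
                    exact absurd (hyw.2 htI) (not_le_of_gt (lt_of_lt_of_le htx hxy))
            · rcases hy with hylo | hyw
              · rw [hkey2 x hxw.1 hxw.2]
                exact (hpc hylo hMhi).2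
              · rw [hkey2 x hxw.1 hxw.2, hkey2 y hyw.1 hyw.2]
          · intro x y hx hy hxy
            have hx1 : F x ∈ hi := hFhi x (fun h => hx (Or.inl h))
            have hx2 : ¬(x ∉ I ∧ x ∈ lowerBounds I) := fun h => hx (Or.inr h)
            have hy1 : F y ∈ hi := hFhi y (fun h => hy (Or.inl h))
            have hy2 : ¬(y ∉ I ∧ y ∈ lowerBounds I) := fun h => hy (Or.inr h)
            exact hp3 hx1 hy1 (Fmono_aux hFI hxy (hkey x hx2) (hkey y hy2))
          · rintro a b ha hb
            have hb1 : F b ∈ hi := hFhi b (fun h => hb (Or.inl h))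
            have hb2 : ¬(b ∉ I ∧ b ∈ lowerBounds I) := fun h => hb (Or.inr h)
            rcases ha with halo | haw
            · constructor
              · by_contra h
                have hba : b < a := lt_of_not_ge h
                have h1 : F b ≤ F a :=
                  Fmono_aux hFI hba.le (hkey b hb2) (hkey a (hnotboth a halo))
                have h2 : F a ≤ F b := (hpc halo hb1).1
                exact halo.2 ((le_antisymm h1 h2) ▸ hb1)
              · exact (hpc halo hb1).2
            · constructor
              · by_cases hbI : b ∈ I
                · exact haw.2 hbI
                · have hblb : b ∉ lowerBounds I := fun h => hb2 ⟨hbI, h⟩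
                  have hex2 : ∃ t ∈ I, t < b := by
                    by_contra h; push_neg at h
                    exact hblb fun t ht => h t ht
                  obtain ⟨t, htI, htb⟩ := hex2
                  exact le_trans (haw.2 htI) htb.le
              · show p (F b) ≤ p (F a)
                rw [hkey2 a haw.1 haw.2]
                exact hp3 hb1 hMhi (hM.2 (hFI b))
        · have hallhi : ∀ x, F x ∈ hi := fun x => hFhi x (fun h => hlo ⟨F x, h⟩)
          refine ⟨{x | x ∉ I ∧ x ∈ lowerBounds I}, ⟨w, hwI, hwlb⟩, ?_, ?_, ?_⟩
          · rintro x y hx hy hxy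
            show p (F x) ≤ p (F y)
            rw [hkey2 x hx.1 hx.2, hkey2 y hy.1 hy.2]
          · intro x y hx hy hxy
            exact hp3 (hallhi x) (hallhi y)
              (Fmono_aux hFI hxy (hkey x hx) (hkey y hy))
          · rintro a b ha hb
            constructor
            · by_cases hbI : b ∈ I
              · exact ha.2 hbI
              · have hblb : b ∉ lowerBounds I := fun h => hb ⟨hbI, h⟩
                have hex2 : ∃ t ∈ I, t < b := by
                  by_contra h; push_neg at h
                  exact hblb fun t ht => h t ht
                obtain ⟨t, htI, htb⟩ := hex2
                exact le_trans (ha.2 htI) htb.le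
            · show p (F b) ≤ p (F a)
              rw [hkey2 a ha.1 ha.2]
              exact hp3 (hallhi b) hMhi (hM.2 (hFI b))
      · have hkey : ∀ x,
            (IsGreatest {t ∈ I | t ≤ x} (F x) ∨
              (IsLeast {t ∈ I | x ≤ t} (F x) ∧ ¬∃ m, IsGreatest {t ∈ I | t < x} m)) :=
          fun x => hLR x (fun h => hTW ⟨x, h⟩) (fun h => hBW ⟨x, h⟩)
        by_cases hlo : lo.Nonempty
        · refine ⟨{x | F x ∈ lo}, ?_, ?_, ?_, ?_⟩
          · obtain ⟨t, ht⟩ := hlo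
            refine ⟨t, ?_⟩
            show F t ∈ lo
            rw [hFfix t (hloI ht)]; exact ht
          · intro x y hx hy hxy
            exact hp4 hx hy (Fmono_aux hFI hxy (hkey x) (hkey y))
          · intro x y hx hy hxy
            exact hp3 (hFhi x hx) (hFhi y hy) (Fmono_aux hFI hxy (hkey x) (hkey y))
          · intro a b ha hb
            have hbhi := hFhi b hb
            constructor
            · by_contra h
              have h1 : F b ≤ F a := Fmono_aux hFI (le_of_not_ge h) (hkey b) (hkey a)
              have h2 : F a ≤ F b := (hpc ha hbhi).1
              exact ha.2 ((le_antisymm h1 h2) ▸ hbhi)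
            · exact (hpc ha hbhi).2
        · refine ⟨Set.univ, ⟨y0, trivial⟩, ?_, ?_, ?_⟩
          · intro x y _ _ hxy
            exact hp3 (hFhi x (fun h => hlo ⟨F x, h⟩)) (hFhi y (fun h => hlo ⟨F y, h⟩))
              (Fmono_aux hFI hxy (hkey x) (hkey y))
          · intro x y hx _ _
            exact absurd (Set.mem_univ x) hx
          · intro a b _ hb
            exact absurd (Set.mem_univ b) hb
  · -- the regularity identity
    funext x
    have hax : α x ∈ I := ⟨x, rfl⟩
    show α (p (F (α x))) = α x
    rw [hFfix (α x) hax]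
    by_cases h : α x ∈ hi
    · exact (hp1 (α x) h).2
    · exact (hp2 (α x) ⟨hax, h⟩).2

end BackwardMain
/-- Regularity criterion in `OP(X)`: an orientation-preserving full transformation `α` is
regular in `OP(X)` iff (1) whenever `Im α` is bounded above or below, it has a maximum or a
minimum; and (2) for every `x ∉ Im α` which is neither an upper nor a lower bound of `Im α`,
either `{t ∈ Im α | t < x}` has a maximum or `{t ∈ Im α | t > x}` has a minimum. -/
theorem stmt9 (X : Type*) [LinearOrder X] (α : X → X) (hα : IsOPFull α) :
    (∃ β : X → X, IsOPFull β ∧ (fun x => α (β (α x))) = α) ↔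
      (((BddAbove (Set.range α) ∨ BddBelow (Set.range α)) →
        ((∃ m, IsGreatest (Set.range α) m) ∨ ∃ m, IsLeast (Set.range α) m)) ∧
      ∀ x : X, x ∉ Set.range α → x ∉ upperBounds (Set.range α) →
        x ∉ lowerBounds (Set.range α) →
        ((∃ m, IsGreatest {t ∈ Set.range α | t < x} m) ∨
          ∃ m, IsLeast {t ∈ Set.range α | x < t} m)) := by
  obtain ⟨Y, hY⟩ := hα
  constructor
  · rintro ⟨β, ⟨Z, hZ⟩, hreg⟩
    exact forward_conds hY hZ (fun x => congrFun hreg x)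
  · rintro ⟨cond1, cond2⟩
    exact backward_main hY cond1 cond2
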